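/- (qRK error horizon, one-step form.) Let β < q < 1 − β with qm and βm integers. Suppose A x* = b_t, b = b_t + η + ξ with ‖ξ‖₀ ≤ βm and supp(η) ∩ supp(ξ) = ∅, and assume (q/(q−β))·(βm/σ_max(A)² + 2β/(1 − q − β) + 4β√m/(σ_max(A)·√(1 − q − β))) < σ_{q−β,min}(A)²/σ_max(A)². For any x_k ∈ ℝⁿ, let B be a set of exactly qm indices with |r_j| ≤ Q for all j ∈ B, containing every j with |r_j| < Q. Then one step of qRK with uniform selection over B satisfies (1/(qm)) Σ_{i∈B} ‖(x_k + r_i a_i) − x*‖² ≤ (1 − C)·‖x_k − x*‖² + (2β(1 − q)/(q(1 − q − β)) + 1)·‖η‖_∞², where C := (q − β)·σ_{q−β,min}(A)²/(q² m) − (β/q)·(1 + 2σ_max(A)²/(m(1 − q − β)) + 4σ_max(A)/(√m·√(1 − q − β))), and C > 0. -/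

import Mathlib

open Finset

/-- Largest singular value of `A`, as the operator norm of the associated
Euclidean linear map. -/
noncomputable def sigmaMax {m n : ℕ} (A : Matrix (Fin m) (Fin n) ℝ) : ℝ :=
  ‖LinearMap.toContinuousLinearMap (Matrix.toEuclideanLin A)‖

/-- `sigmaSMin A k` is the minimum over all index sets `I` of cardinality `k`
of the smallest value of `‖A_I x‖` over unit vectors `x`. -/
noncomputable def sigmaSMin {m n : ℕ} (A : Matrix (Fin m) (Fin n) ℝ) (k : ℕ) : ℝ :=
  sInf {t : ℝ | ∃ I : Finset (Fin m), I.card = k ∧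
    t = sInf {u : ℝ | ∃ x : EuclideanSpace ℝ (Fin n), ‖x‖ = 1 ∧
      u = Real.sqrt (∑ i ∈ I, (A.mulVec (fun k => x k) i) ^ 2)}}

/-- The `j`-th row of `A`, as a vector in Euclidean space. -/
noncomputable def row {m n : ℕ} (A : Matrix (Fin m) (Fin n) ℝ) (j : Fin m) :
    EuclideanSpace ℝ (Fin n) := WithLp.toLp 2 (fun k => A j k)

/-- Residual `r_j = b_j - ⟨x, a_j⟩`. -/
noncomputable def resid {m n : ℕ} (A : Matrix (Fin m) (Fin n) ℝ) (b : Fin m → ℝ)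
    (x : EuclideanSpace ℝ (Fin n)) (j : Fin m) : ℝ :=
  b j - ∑ k, x k * A j k

/-- `IsQuantile f k Q` says `Q` is the `k`-th smallest value (1-indexed,
counted with multiplicity) of the multiset `{f j}`. -/
def IsQuantile {m : ℕ} (f : Fin m → ℝ) (k : ℕ) (Q : ℝ) : Prop :=
  k ≤ (Finset.univ.filter fun j => f j ≤ Q).card ∧
  (Finset.univ.filter fun j => f j < Q).card < k

/-!
Write `e = x_k - x*` and `u_j = ⟪e, a_j⟫`, so that `r_j = η_j + ξ_j - u_j`. On an uncorrupted row
(`ξ_j = 0`) the update replaces the component `u_j` of `e` along `a_j` by `η_j`, so by Pythagoras its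
squared error is `‖e‖² + η_j² - u_j²`; on one of the at most `βm` corrupted rows of `B` the triangle
inequality bounds it by `(‖e‖ + Q)²`. The at least `(q - β)m` uncorrupted rows of `B` contribute
`∑ u_j² ≥ σ_{q-β,min}² ‖e‖²`. Finally `Q` is small: every row outside `B` has `|r_j| ≥ Q`, so at
least `(1 - q - β)m` uncorrupted rows have `|u_j| ≥ Q - ‖η‖_∞`, whence
`(1 - q - β)m (Q - ‖η‖_∞)² ≤ ‖A e‖² ≤ σ_max² ‖e‖²`.
-/

open scoped Matrix RealInnerProductSpace

theorem norm_add_smul_sub_inner_sq {E : Type*} [NormedAddCommGroup E] [InnerProductSpace ℝ E]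
    {a : E} (ha : ‖a‖ = 1) (e : E) (c : ℝ) :
    ‖e + (c - ⟪e, a⟫) • a‖ ^ 2 = ‖e‖ ^ 2 + c ^ 2 - ⟪e, a⟫ ^ 2 := by
  rw [norm_add_sq_real, real_inner_smul_right, norm_smul, ha, Real.norm_eq_abs, mul_one, sq_abs]
  ring

theorem le_add_div_sqrt_of_sum_sq_le {ι : Type*} (T : Finset ι) (u : ι → ℝ) {d M N Q : ℝ}
    (hd : 0 < d) (hdT : d ≤ T.card) (hM : 0 ≤ M) (hQ : ∀ j ∈ T, Q ≤ N + |u j|)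
    (hsum : ∑ j ∈ T, u j ^ 2 ≤ M ^ 2) :
    Q ≤ N + M / Real.sqrt d := by
  rcases le_or_gt Q N with hQN | hQN
  · have : 0 ≤ M / Real.sqrt d := by positivity
    linarith
  have hsq : (Real.sqrt d * (Q - N)) ^ 2 ≤ M ^ 2 := calc
    (Real.sqrt d * (Q - N)) ^ 2 = d * (Q - N) ^ 2 := by rw [mul_pow, Real.sq_sqrt hd.le]
    _ ≤ T.card * (Q - N) ^ 2 := by gcongr
    _ = ∑ j ∈ T, (Q - N) ^ 2 := by rw [Finset.sum_const, nsmul_eq_mul]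
    _ ≤ ∑ j ∈ T, u j ^ 2 := Finset.sum_le_sum fun j hj => by
          rw [← sq_abs (u j)]; gcongr; linarith [hQ j hj]
    _ ≤ M ^ 2 := hsum
  have hle := (pow_le_pow_iff_left₀ (by positivity) hM two_ne_zero).mp hsq
  have : Q - N ≤ M / Real.sqrt d := by rw [le_div_iff₀ (Real.sqrt_pos.mpr hd)]; linarith
  linarith

section

variable {m n : ℕ}

theorem inner_row (A : Matrix (Fin m) (Fin n) ℝ) (x : EuclideanSpace ℝ (Fin n)) (j : Fin m) :
    ⟪x, row A j⟫ = (A *ᵥ x) j := by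
  simp [row, Matrix.mulVec, dotProduct, PiLp.inner_apply]

theorem norm_row (A : Matrix (Fin m) (Fin n) ℝ) (j : Fin m) :
    ‖row A j‖ = Real.sqrt (∑ k, A j k ^ 2) := by
  simp [EuclideanSpace.norm_eq, row]

theorem resid_eq {A : Matrix (Fin m) (Fin n) ℝ} {xstar : EuclideanSpace ℝ (Fin n)}
    {bt b η ξ : Fin m → ℝ} (hsol : A *ᵥ xstar = bt) (hb : b = bt + η + ξ)
    (x : EuclideanSpace ℝ (Fin n)) (j : Fin m) :
    resid A b x j = η j + ξ j - ⟪x - xstar, row A j⟫ := by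
  rw [inner_row, WithLp.ofLp_sub, Matrix.mulVec_sub, hsol, hb]
  simp [resid, Matrix.mulVec, dotProduct, mul_comm]
  ring

theorem sigmaMax_nonneg (A : Matrix (Fin m) (Fin n) ℝ) : 0 ≤ sigmaMax A := norm_nonneg _

theorem norm_row_le_sigmaMax (A : Matrix (Fin m) (Fin n) ℝ) (j : Fin m) :
    ‖row A j‖ ≤ sigmaMax A := by
  have h1 : ‖row A j‖ ^ 2 ≤ sigmaMax A * ‖row A j‖ := calc
    ‖row A j‖ ^ 2 = (Matrix.toEuclideanLin A (row A j)) j := by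
      rw [← real_inner_self_eq_norm_sq, inner_row]; simp
    _ ≤ ‖Matrix.toEuclideanLin A (row A j)‖ := (Real.le_norm_self _).trans (PiLp.norm_apply_le _ j)
    _ ≤ sigmaMax A * ‖row A j‖ :=
      (LinearMap.toContinuousLinearMap (Matrix.toEuclideanLin A)).le_opNorm _
  nlinarith [norm_nonneg (row A j), sigmaMax_nonneg A]

theorem sum_mulVec_sq_le (A : Matrix (Fin m) (Fin n) ℝ) (x : EuclideanSpace ℝ (Fin n)) :
    ∑ j, (A *ᵥ x) j ^ 2 ≤ sigmaMax A ^ 2 * ‖x‖ ^ 2 := by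
  have h := (LinearMap.toContinuousLinearMap (Matrix.toEuclideanLin A)).le_opNorm x
  calc ∑ j, (A *ᵥ x) j ^ 2 = ‖Matrix.toEuclideanLin A x‖ ^ 2 := by
        simp [EuclideanSpace.norm_sq_eq]
    _ ≤ (sigmaMax A * ‖x‖) ^ 2 := by gcongr; exact h
    _ = sigmaMax A ^ 2 * ‖x‖ ^ 2 := mul_pow _ _ _

theorem sigmaSMin_nonneg (A : Matrix (Fin m) (Fin n) ℝ) (k : ℕ) : 0 ≤ sigmaSMin A k :=
  Real.sInf_nonneg <| by
    rintro _ ⟨I, -, rfl⟩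
    exact Real.sInf_nonneg <| by rintro _ ⟨x, -, rfl⟩; positivity

theorem sigmaSMin_sq_mul_le (A : Matrix (Fin m) (Fin n) ℝ) {I : Finset (Fin m)}
    (x : EuclideanSpace ℝ (Fin n)) :
    sigmaSMin A I.card ^ 2 * ‖x‖ ^ 2 ≤ ∑ i ∈ I, (A *ᵥ x) i ^ 2 := by
  rcases eq_or_ne x 0 with rfl | hx
  · simp
  set y := ‖x‖⁻¹ • x
  have hy : ‖y‖ = 1 := norm_smul_inv_norm hx
  have hAy : ∑ i ∈ I, (A *ᵥ y) i ^ 2 = (‖x‖⁻¹) ^ 2 * ∑ i ∈ I, (A *ᵥ x) i ^ 2 := by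
    simp [y, Matrix.mulVec_smul, mul_pow, Finset.mul_sum]
  have hS : sigmaSMin A I.card ≤ Real.sqrt (∑ i ∈ I, (A *ᵥ y) i ^ 2) := by
    refine le_trans (csInf_le ⟨0, ?_⟩ ⟨I, rfl, rfl⟩)
      (csInf_le ⟨0, by rintro _ ⟨z, -, rfl⟩; positivity⟩ ⟨y, hy, rfl⟩)
    rintro _ ⟨J, -, rfl⟩
    exact Real.sInf_nonneg <| by rintro _ ⟨z, -, rfl⟩; positivity
  have hS2 := pow_le_pow_left₀ (sigmaSMin_nonneg A _) hS 2
  rw [Real.sq_sqrt (by positivity), hAy] at hS2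
  calc sigmaSMin A I.card ^ 2 * ‖x‖ ^ 2 ≤ ‖x‖⁻¹ ^ 2 * (∑ i ∈ I, (A *ᵥ x) i ^ 2) * ‖x‖ ^ 2 := by
        gcongr
    _ = ∑ i ∈ I, (A *ᵥ x) i ^ 2 := by field_simp

theorem resid_threshold_le {A : Matrix (Fin m) (Fin n) ℝ}
    {xstar : EuclideanSpace ℝ (Fin n)} {bt b η ξ : Fin m → ℝ}
    (hsol : A *ᵥ xstar = bt) (hb : b = bt + η + ξ) {kq kβ : ℕ}
    (hsparse : (Finset.univ.filter fun j => ξ j ≠ 0).card ≤ kβ)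
    (hkm : (kq + kβ : ℝ) < m) (x : EuclideanSpace ℝ (Fin n)) {Q : ℝ} {B : Finset (Fin m)}
    (hBcard : B.card = kq) (hBfull : ∀ j, |resid A b x j| < Q → j ∈ B) :
    Q ≤ ‖η‖ + sigmaMax A * ‖x - xstar‖ / Real.sqrt (m - kq - kβ) := by
  classical
  set T := Finset.univ.filter fun j => j ∉ B ∧ ξ j = 0
  have hcover : (Finset.univ : Finset (Fin m)) ⊆ T ∪ B ∪ Finset.univ.filter fun j => ξ j ≠ 0 := by
    intro j _
    by_cases hj : j ∈ B <;> by_cases hξ : ξ j = 0 <;> simp [T, hj, hξ]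
  have hT : (m : ℝ) - kq - kβ ≤ T.card := by
    have h₁ := Finset.card_le_card hcover
    have h₂ := Finset.card_union_le (T ∪ B) (Finset.univ.filter fun j => ξ j ≠ 0)
    have h₃ := Finset.card_union_le T B
    rw [Finset.card_univ, Fintype.card_fin] at h₁
    have : (m : ℝ) ≤ T.card + kq + kβ := by exact_mod_cast (show m ≤ T.card + kq + kβ by omega)
    linarith
  refine le_add_div_sqrt_of_sum_sq_le T (fun j => (A *ᵥ ⇑(x - xstar)) j) (by linarith) hT
    (mul_nonneg (sigmaMax_nonneg A) (norm_nonneg _)) (fun j hj => ?_) ?_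
  · obtain ⟨hjB, hξ⟩ := (Finset.mem_filter.mp hj).2
    have hQr : Q ≤ |resid A b x j| := not_lt.mp fun h => hjB (hBfull j h)
    rw [resid_eq hsol hb, hξ, add_zero, inner_row] at hQr
    linarith [abs_sub (η j) ((A *ᵥ ⇑(x - xstar)) j), norm_le_pi_norm η j, Real.norm_eq_abs (η j)]
  · calc ∑ j ∈ T, (A *ᵥ ⇑(x - xstar)) j ^ 2 ≤ ∑ j, (A *ᵥ ⇑(x - xstar)) j ^ 2 :=
          Finset.sum_le_sum_of_subset_of_nonneg (Finset.subset_univ T) fun _ _ _ => sq_nonneg _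
      _ ≤ (sigmaMax A * ‖x - xstar‖) ^ 2 := by rw [mul_pow]; exact sum_mulVec_sq_le A _

theorem sum_norm_step_sq_le {A : Matrix (Fin m) (Fin n) ℝ}
    (hrow : ∀ j, ‖row A j‖ = 1) {xstar : EuclideanSpace ℝ (Fin n)} {bt b η ξ : Fin m → ℝ}
    (hsol : A *ᵥ xstar = bt) (hb : b = bt + η + ξ) {kq kβ : ℕ}
    (hsparse : (Finset.univ.filter fun j => ξ j ≠ 0).card ≤ kβ)
    (x : EuclideanSpace ℝ (Fin n)) {B : Finset (Fin m)} (hBcard : B.card = kq) {R : ℝ}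
    (hR0 : 0 ≤ R) (hR : ∀ j ∈ B, |resid A b x j| ≤ R) :
    ∑ i ∈ B, ‖(x + resid A b x i • row A i) - xstar‖ ^ 2 ≤
      kq * (‖x - xstar‖ ^ 2 + ‖η‖ ^ 2) - sigmaSMin A (kq - kβ) ^ 2 * ‖x - xstar‖ ^ 2 +
        kβ * (R ^ 2 + 2 * R * ‖x - xstar‖) := by
  classical
  set e := x - xstar
  have hstep : ∀ i, (x + resid A b x i • row A i) - xstar = e + resid A b x i • row A i :=
    fun i => add_sub_right_comm _ _ _
  set G := B.filter fun i => ξ i = 0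
  set D := B.filter fun i => ¬ξ i = 0
  have hGD : G.card + D.card = kq := by
    rw [Finset.card_filter_add_card_filter_not, hBcard]
  have hD : D.card ≤ kβ :=
    (Finset.card_le_card (Finset.filter_subset_filter _ (Finset.subset_univ B))).trans hsparse
  obtain ⟨I, hIG, hI⟩ := Finset.exists_subset_card_eq (show kq - kβ ≤ G.card by omega)
  have hclean : ∑ i ∈ G, ‖(x + resid A b x i • row A i) - xstar‖ ^ 2 ≤
      G.card * (‖e‖ ^ 2 + ‖η‖ ^ 2) - sigmaSMin A (kq - kβ) ^ 2 * ‖e‖ ^ 2 := calc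
    _ = ∑ i ∈ G, (‖e‖ ^ 2 + η i ^ 2 - ⟪e, row A i⟫ ^ 2) := Finset.sum_congr rfl fun i hi => by
          rw [hstep, resid_eq hsol hb, (Finset.mem_filter.mp hi).2, add_zero,
            norm_add_smul_sub_inner_sq (hrow i)]
    _ ≤ ∑ i ∈ G, (‖e‖ ^ 2 + ‖η‖ ^ 2) - ∑ i ∈ I, ⟪e, row A i⟫ ^ 2 := by
          have hη : ∀ i, η i ^ 2 ≤ ‖η‖ ^ 2 := fun i => by
            simpa only [Real.norm_eq_abs, sq_abs] using
              pow_le_pow_left₀ (norm_nonneg _) (norm_le_pi_norm η i) 2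
          rw [Finset.sum_sub_distrib]
          exact sub_le_sub (Finset.sum_le_sum fun i _ => by linarith [hη i])
            (Finset.sum_le_sum_of_subset_of_nonneg hIG fun _ _ _ => sq_nonneg _)
    _ ≤ _ := by
          rw [Finset.sum_const, nsmul_eq_mul, ← hI]
          simp_rw [inner_row]
          gcongr
          exact sigmaSMin_sq_mul_le A e
  have hcorrupt : ∑ i ∈ D, ‖(x + resid A b x i • row A i) - xstar‖ ^ 2 ≤
      D.card * (‖e‖ ^ 2 + (R ^ 2 + 2 * R * ‖e‖)) := by
    rw [← nsmul_eq_mul]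
    refine Finset.sum_le_card_nsmul _ _ _ fun i hi => ?_
    have : ‖e + resid A b x i • row A i‖ ≤ ‖e‖ + R := by
      grw [norm_add_le, norm_smul, hrow i, mul_one, Real.norm_eq_abs,
        hR i (Finset.mem_filter.mp hi).1]
    rw [hstep]
    nlinarith [norm_nonneg (e + resid A b x i • row A i)]
  rw [← Finset.sum_filter_add_sum_filter_not B (fun i => ξ i = 0)]
  have hGD' : (G.card : ℝ) + D.card = kq := by exact_mod_cast hGD
  have hG' : (G.card : ℝ) * ‖η‖ ^ 2 ≤ kq * ‖η‖ ^ 2 := by gcongr; omega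
  have hD' : (D.card : ℝ) * (R ^ 2 + 2 * R * ‖e‖) ≤ kβ * (R ^ 2 + 2 * R * ‖e‖) := by
    gcongr
  linear_combination hclean + hcorrupt + hG' + hD' + ‖e‖ ^ 2 * hGD'

end

theorem qrk_rate_pos {q β m s S : ℝ} (hβq : β < q) (hq : 0 < q) (hm : 0 < m)
    (hd : 0 < 1 - q - β) (hs : 0 < s)
    (hcond : (q / (q - β)) * (β * m / s ^ 2 + 2 * β / (1 - q - β) +
        4 * β * Real.sqrt m / (s * Real.sqrt (1 - q - β))) < S ^ 2 / s ^ 2) :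
    0 < (q - β) * S ^ 2 / (q ^ 2 * m) -
      (β / q) * (1 + 2 * s ^ 2 / (m * (1 - q - β)) +
        4 * s / (Real.sqrt m * Real.sqrt (1 - q - β))) := by
  have hqβ : 0 < q - β := by linarith
  have hm' := Real.sq_sqrt hm.le
  have : 0 < Real.sqrt m := Real.sqrt_pos.mpr hm
  have : 0 < Real.sqrt (1 - q - β) := Real.sqrt_pos.mpr hd
  set r := Real.sqrt m
  have key : (q - β) * S ^ 2 / (q ^ 2 * m) -
      (β / q) * (1 + 2 * s ^ 2 / (m * (1 - q - β)) + 4 * s / (r * Real.sqrt (1 - q - β))) =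
      (q - β) * s ^ 2 / (q ^ 2 * m) * (S ^ 2 / s ^ 2 - (q / (q - β)) * (β * m / s ^ 2 +
        2 * β / (1 - q - β) + 4 * β * r / (s * Real.sqrt (1 - q - β)))) := by
    field_simp
    rw [← hm']
    ring
  rw [key]
  exact mul_pos (by positivity) (sub_pos.mpr hcond)

theorem qrk_bound_of_sum_le {q β m s S E N T : ℝ} (hβ : 0 ≤ β) (hq : 0 < q) (hm : 0 < m)
    (hd : 0 < 1 - q - β)
    (hsum : T ≤ q * m * (E ^ 2 + N ^ 2) - S ^ 2 * E ^ 2 + β * m *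
      ((N + s / (Real.sqrt m * Real.sqrt (1 - q - β)) * E) ^ 2 +
        2 * (N + s / (Real.sqrt m * Real.sqrt (1 - q - β)) * E) * E)) :
    (1 / (q * m)) * T ≤
      (1 - ((q - β) * S ^ 2 / (q ^ 2 * m) -
        (β / q) * (1 + 2 * s ^ 2 / (m * (1 - q - β)) +
          4 * s / (Real.sqrt m * Real.sqrt (1 - q - β))))) * E ^ 2 +
        (2 * β * (1 - q) / (q * (1 - q - β)) + 1) * N ^ 2 := by
  set t := s / (Real.sqrt m * Real.sqrt (1 - q - β))
  have hK : 1 + 2 * t ^ 2 + 4 * t =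
      1 + 2 * s ^ 2 / (m * (1 - q - β)) + 4 * s / (Real.sqrt m * Real.sqrt (1 - q - β)) := by
    simp only [t, div_pow, mul_pow, Real.sq_sqrt hm.le, Real.sq_sqrt hd.le]
    ring
  set K := 1 + 2 * s ^ 2 / (m * (1 - q - β)) + 4 * s / (Real.sqrt m * Real.sqrt (1 - q - β))
  have hR : (N + t * E) ^ 2 + 2 * (N + t * E) * E ≤ 2 * N ^ 2 + K * E ^ 2 := by
    nlinarith [sq_nonneg (N - (1 + t) * E)]
  -- The sum bound yields the rate `S² / (qm) - (β / q) K` and noise factor `1 + 2β / q`,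
  -- both sharper than the stated constants.
  have hrate : (q - β) * S ^ 2 / (q ^ 2 * m) ≤ S ^ 2 / (q * m) := by
    rw [div_le_div_iff₀ (by positivity) (by positivity)]
    nlinarith [mul_nonneg (mul_nonneg (sq_nonneg S) (mul_pos hq hm).le) hβ]
  have hnoise : 2 * β / q ≤ 2 * β * (1 - q) / (q * (1 - q - β)) := by
    rw [div_le_div_iff₀ hq (by positivity)]
    nlinarith [mul_nonneg (mul_nonneg hβ hβ) hq.le]
  calc (1 / (q * m)) * T
      ≤ (1 / (q * m)) * (q * m * (E ^ 2 + N ^ 2) - S ^ 2 * E ^ 2 +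
          β * m * (2 * N ^ 2 + K * E ^ 2)) := by
        gcongr
        nlinarith [mul_le_mul_of_nonneg_left hR (mul_nonneg hβ hm.le)]
    _ = (1 - (S ^ 2 / (q * m) - β / q * K)) * E ^ 2 + (2 * β / q + 1) * N ^ 2 := by
        field_simp
        ring
    _ ≤ _ := by gcongr

theorem qrk_error_horizon_one_step_general
    {m n : ℕ} (A : Matrix (Fin m) (Fin n) ℝ)
    (q β : ℝ) (kq kβ : ℕ)
    (hm : 0 < m)
    (hrow : ∀ j, ∑ k, (A j k) ^ 2 = 1)
    (hβq : β < q) (hq1 : q < 1 - β)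
    (hkq : (kq : ℝ) = q * m) (hkβ : (kβ : ℝ) = β * m)
    (xstar : EuclideanSpace ℝ (Fin n)) (bt b η ξ : Fin m → ℝ)
    (hsol : A.mulVec (fun k => xstar k) = bt)
    (hb : b = bt + η + ξ)
    (hsparse : (Finset.univ.filter fun j => ξ j ≠ 0).card ≤ kβ)
    (hcond : (q / (q - β)) * (β * m / sigmaMax A ^ 2 + 2 * β / (1 - q - β) +
        4 * β * Real.sqrt m / (sigmaMax A * Real.sqrt (1 - q - β))) <
      sigmaSMin A (kq - kβ) ^ 2 / sigmaMax A ^ 2)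
    (xk : EuclideanSpace ℝ (Fin n)) (Q : ℝ)
    (B : Finset (Fin m)) (hBcard : B.card = kq)
    (hBQ : ∀ j ∈ B, |resid A b xk j| ≤ Q)
    (hBfull : ∀ j, |resid A b xk j| < Q → j ∈ B)
    (C : ℝ)
    (hC : C = (q - β) * sigmaSMin A (kq - kβ) ^ 2 / (q ^ 2 * m) -
      (β / q) * (1 + 2 * sigmaMax A ^ 2 / (m * (1 - q - β)) +
        4 * sigmaMax A / (Real.sqrt m * Real.sqrt (1 - q - β)))) :
    (1 / (q * m)) * ∑ i ∈ B, ‖(xk + resid A b xk i • row A i) - xstar‖ ^ 2 ≤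
      (1 - C) * ‖xk - xstar‖ ^ 2 +
        (2 * β * (1 - q) / (q * (1 - q - β)) + 1) * ‖η‖ ^ 2 ∧
    0 < C := by
  have hmR : (0 : ℝ) < m := Nat.cast_pos.mpr hm
  have hβ : 0 ≤ β := nonneg_of_mul_nonneg_left (hkβ ▸ Nat.cast_nonneg kβ) hmR
  have hq : 0 < q := hβ.trans_lt hβq
  have hd : 0 < 1 - q - β := by linarith
  have hunit : ∀ j, ‖row A j‖ = 1 := fun j => by rw [norm_row, hrow, Real.sqrt_one]
  have hs : 1 ≤ sigmaMax A := hunit ⟨0, hm⟩ ▸ norm_row_le_sigmaMax A ⟨0, hm⟩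
  have hthreshold :
      Q ≤ ‖η‖ + sigmaMax A / (Real.sqrt m * Real.sqrt (1 - q - β)) * ‖xk - xstar‖ := by
    have h := resid_threshold_le hsol hb hsparse (by rw [hkq, hkβ]; nlinarith) xk hBcard hBfull
    rwa [show (m : ℝ) - kq - kβ = m * (1 - q - β) by rw [hkq, hkβ]; ring, Real.sqrt_mul hmR.le,
      mul_div_right_comm] at h
  have hsum := sum_norm_step_sq_le hunit hsol hb hsparse xk hBcard
    (by have := sigmaMax_nonneg A; positivity) fun j hj => (hBQ j hj).trans hthreshold
  rw [hkq, hkβ] at hsum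
  subst hC
  exact ⟨qrk_bound_of_sum_le hβ hq hmR hd hsum, qrk_rate_pos hβq hq hmR hd (by linarith) hcond⟩

theorem qrk_error_horizon_one_step
    {m n : ℕ} (A : Matrix (Fin m) (Fin n) ℝ)
    (q β : ℝ) (kq kβ : ℕ)
    (hm : 0 < m) (hmn : n ≤ m) (hrank : A.rank = n)
    (hrow : ∀ j, ∑ k, (A j k) ^ 2 = 1)
    (hβq : β < q) (hq1 : q < 1 - β)
    (hkq : (kq : ℝ) = q * m) (hkβ : (kβ : ℝ) = β * m)
    (xstar : EuclideanSpace ℝ (Fin n)) (bt b η ξ : Fin m → ℝ)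
    (hsol : A.mulVec (fun k => xstar k) = bt)
    (hb : b = bt + η + ξ)
    (hsparse : (Finset.univ.filter fun j => ξ j ≠ 0).card ≤ kβ)
    (hdisj : ∀ j, η j = 0 ∨ ξ j = 0)
    (hcond : (q / (q - β)) * (β * m / sigmaMax A ^ 2 + 2 * β / (1 - q - β) +
        4 * β * Real.sqrt m / (sigmaMax A * Real.sqrt (1 - q - β))) <
      sigmaSMin A (kq - kβ) ^ 2 / sigmaMax A ^ 2)
    (xk : EuclideanSpace ℝ (Fin n)) (Q : ℝ)
    (hQ : IsQuantile (fun j => |resid A b xk j|) kq Q)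
    (B : Finset (Fin m)) (hBcard : B.card = kq)
    (hBQ : ∀ j ∈ B, |resid A b xk j| ≤ Q)
    (hBfull : ∀ j, |resid A b xk j| < Q → j ∈ B)
    (C : ℝ)
    (hC : C = (q - β) * sigmaSMin A (kq - kβ) ^ 2 / (q ^ 2 * m) -
      (β / q) * (1 + 2 * sigmaMax A ^ 2 / (m * (1 - q - β)) +
        4 * sigmaMax A / (Real.sqrt m * Real.sqrt (1 - q - β)))) :
    (1 / (q * m)) * ∑ i ∈ B, ‖(xk + resid A b xk i • row A i) - xstar‖ ^ 2 ≤
      (1 - C) * ‖xk - xstar‖ ^ 2 +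
        (2 * β * (1 - q) / (q * (1 - q - β)) + 1) * ‖η‖ ^ 2 ∧
    0 < C :=
  qrk_error_horizon_one_step_general A q β kq kβ hm hrow hβq hq1 hkq hkβ xstar bt b η ξ hsol hb
    hsparse hcond xk Q B hBcard hBQ hBfull C hC
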